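/- Let S₁ ⊂ ℂ^{d₁} ⊗ ℂ^{d₂} and S₂ ⊂ ℂ^{d₁'} ⊗ ℂ^{d₂'} be finite sets of nonzero product vectors such that no nonzero product vector is orthogonal to all elements of S₁ (in ℂ^{d₁} ⊗ ℂ^{d₂}) and no nonzero product vector is orthogonal to all elements of S₂ (in ℂ^{d₁'} ⊗ ℂ^{d₂'}). Then, regarding tensor products v₁ ⊗ v₂ for v₁ ∈ S₁, v₂ ∈ S₂ as product vectors in (ℂ^{d₁} ⊗ ℂ^{d₁'}) ⊗ (ℂ^{d₂} ⊗ ℂ^{d₂'}) under the natural reordering isomorphism, no nonzero product vector a ⊗ b with a ∈ ℂ^{d₁} ⊗ ℂ^{d₁'}, b ∈ ℂ^{d₂} ⊗ ℂ^{d₂'} is orthogonal to all vectors v₁ ⊗ v₂ with v₁ ∈ S₁, v₂ ∈ S₂. -/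

import Mathlib

/-!
Suppose the reordered `a ⊗ b` is orthogonal to every `v₁ ⊗ v₂`. Contracting it with
`v₁ = u ⊗ w ∈ S₁` gives the product vector `⟨u, a⟩ ⊗ ⟨w, b⟩` of the second system, which is
orthogonal to all of `S₂` and hence zero: `u` is orthogonal to every column of `a`, or `w` to
every column of `b`. So for nonzero columns `α` of `a` and `β` of `b`, the nonzero product vector
`α ⊗ β` is orthogonal to all of `S₁`.
-/

open scoped ComplexConjugate

/-- The product (tensor) vector u ⊗ w, for general finite index types. -/
noncomputable def tp {ι κ : Type*} [Fintype ι] [Fintype κ]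
    (u : EuclideanSpace ℂ ι) (w : EuclideanSpace ℂ κ) : EuclideanSpace ℂ (ι × κ) :=
  WithLp.toLp 2 (fun p : ι × κ => u p.1 * w p.2)

/-- The natural reordering of a ⊗ b, with a ∈ ℂ^{d₁} ⊗ ℂ^{d₁'} and
b ∈ ℂ^{d₂} ⊗ ℂ^{d₂'}, viewed as a vector of
(ℂ^{d₁} ⊗ ℂ^{d₂}) ⊗ (ℂ^{d₁'} ⊗ ℂ^{d₂'}). -/
noncomputable def reord {d₁ d₂ d₁' d₂' : ℕ}
    (a : EuclideanSpace ℂ (Fin d₁ × Fin d₁')) (b : EuclideanSpace ℂ (Fin d₂ × Fin d₂')) :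
    EuclideanSpace ℂ ((Fin d₁ × Fin d₂) × (Fin d₁' × Fin d₂')) :=
  WithLp.toLp 2 (fun p : (Fin d₁ × Fin d₂) × (Fin d₁' × Fin d₂') =>
    a (p.1.1, p.2.1) * b (p.1.2, p.2.2))

section ProductVectors

variable {ι ι' κ : Type*}

noncomputable def column (a : EuclideanSpace ℂ (ι × ι')) (i' : ι') : EuclideanSpace ℂ ι :=
  WithLp.toLp 2 fun i => a (i, i')

lemma exists_column_ne_zero {a : EuclideanSpace ℂ (ι × ι')} (ha : a ≠ 0) :
    ∃ i', column a i' ≠ 0 := by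
  by_contra! h
  exact ha (PiLp.ext fun p => by simpa [column] using congrArg (· p.1) (h p.2))

variable [Fintype ι] [Fintype κ]

lemma inner_tp_tp (u u' : EuclideanSpace ℂ ι) (w w' : EuclideanSpace ℂ κ) :
    inner ℂ (tp u w) (tp u' w') = inner ℂ u u' * inner ℂ w w' := by
  simp only [PiLp.inner_apply, tp, RCLike.inner_apply, map_mul, Fintype.sum_prod_type,
    Finset.sum_mul_sum]
  refine Finset.sum_congr rfl fun i _ => Finset.sum_congr rfl fun j _ => ?_
  ring

lemma tp_eq_zero_iff {u : EuclideanSpace ℂ ι} {w : EuclideanSpace ℂ κ} :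
    tp u w = 0 ↔ u = 0 ∨ w = 0 := by
  refine ⟨fun h => ?_, ?_⟩
  · by_contra! hne
    obtain ⟨i, hi⟩ := Function.ne_iff.1 (fun h' => hne.1 (PiLp.ext (congrFun h')))
    obtain ⟨j, hj⟩ := Function.ne_iff.1 (fun h' => hne.2 (PiLp.ext (congrFun h')))
    exact mul_ne_zero hi hj (by simpa [tp] using congrArg (· (i, j)) h)
  · rintro (rfl | rfl) <;> ext <;> simp [tp]

noncomputable def partialInner (u : EuclideanSpace ℂ ι) (a : EuclideanSpace ℂ (ι × ι')) :
    EuclideanSpace ℂ ι' :=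
  WithLp.toLp 2 fun i' => inner ℂ u (column a i')

lemma partialInner_eq_zero_iff {u : EuclideanSpace ℂ ι} {a : EuclideanSpace ℂ (ι × ι')} :
    partialInner u a = 0 ↔ ∀ i', inner ℂ u (column a i') = 0 := by
  simp [partialInner, funext_iff]

end ProductVectors

section Reordering

variable {d₁ d₂ d₁' d₂' : ℕ}

lemma ne_zero_and_ne_zero_of_reord_ne_zero {a : EuclideanSpace ℂ (Fin d₁ × Fin d₁')}
    {b : EuclideanSpace ℂ (Fin d₂ × Fin d₂')} (h : reord a b ≠ 0) : a ≠ 0 ∧ b ≠ 0 := by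
  constructor <;> rintro rfl <;> exact h (by ext; simp [reord])

/-- Contracting `reord a b` with `u ⊗ w` over the first system leaves a product vector. -/
lemma inner_tp_tp_reord (a : EuclideanSpace ℂ (Fin d₁ × Fin d₁'))
    (b : EuclideanSpace ℂ (Fin d₂ × Fin d₂')) (u : EuclideanSpace ℂ (Fin d₁))
    (w : EuclideanSpace ℂ (Fin d₂)) (v : EuclideanSpace ℂ (Fin d₁' × Fin d₂')) :
    inner ℂ (tp (tp u w) v) (reord a b) = inner ℂ v (tp (partialInner u a) (partialInner w b)) := by
  simp only [PiLp.inner_apply, tp, reord, partialInner, column, RCLike.inner_apply, map_mul]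
  rw [Fintype.sum_prod_type, Finset.sum_comm]
  refine Finset.sum_congr rfl fun p _ => ?_
  rw [Fintype.sum_prod_type, Finset.sum_mul_sum, Finset.sum_mul]
  refine Finset.sum_congr rfl fun i _ => ?_
  rw [Finset.sum_mul]
  refine Finset.sum_congr rfl fun j _ => ?_
  ring

end Reordering

theorem stmt8_general (d₁ d₂ d₁' d₂' : ℕ)
    (S₁ : Set (EuclideanSpace ℂ (Fin d₁ × Fin d₂)))
    (S₂ : Set (EuclideanSpace ℂ (Fin d₁' × Fin d₂')))
    (hS₁prod : ∀ v ∈ S₁, v ≠ 0 ∧ ∃ (u : EuclideanSpace ℂ (Fin d₁))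
      (w : EuclideanSpace ℂ (Fin d₂)), v = tp u w)
    (hS₁upb : ¬ ∃ (u : EuclideanSpace ℂ (Fin d₁)) (w : EuclideanSpace ℂ (Fin d₂)),
        tp u w ≠ 0 ∧ ∀ v ∈ S₁, inner ℂ v (tp u w) = (0 : ℂ))
    (hS₂upb : ¬ ∃ (u : EuclideanSpace ℂ (Fin d₁')) (w : EuclideanSpace ℂ (Fin d₂')),
        tp u w ≠ 0 ∧ ∀ v ∈ S₂, inner ℂ v (tp u w) = (0 : ℂ)) :
    ¬ ∃ (a : EuclideanSpace ℂ (Fin d₁ × Fin d₁')) (b : EuclideanSpace ℂ (Fin d₂ × Fin d₂')),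
        reord a b ≠ 0 ∧
        ∀ v₁ ∈ S₁, ∀ v₂ ∈ S₂, inner ℂ (tp v₁ v₂) (reord a b) = (0 : ℂ) := by
  rintro ⟨a, b, hab, horth⟩
  obtain ⟨ha, hb⟩ := ne_zero_and_ne_zero_of_reord_ne_zero hab
  obtain ⟨i', hi'⟩ := exists_column_ne_zero ha
  obtain ⟨j', hj'⟩ := exists_column_ne_zero hb
  refine hS₁upb ⟨column a i', column b j', by simp [tp_eq_zero_iff, hi', hj'], ?_⟩
  intro v₁ hv₁
  obtain ⟨-, u, w, rfl⟩ := hS₁prod v₁ hv₁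
  have hcontr : tp (partialInner u a) (partialInner w b) = 0 := by
    by_contra hne
    exact hS₂upb ⟨_, _, hne, fun v₂ hv₂ => by rw [← inner_tp_tp_reord]; exact horth _ hv₁ _ hv₂⟩
  rw [inner_tp_tp]
  rcases tp_eq_zero_iff.1 hcontr with h | h
  · simp [partialInner_eq_zero_iff.1 h i']
  · simp [partialInner_eq_zero_iff.1 h j']

/-- the tensor product of two unextendible product bases is
again unextendible with respect to the bipartite cut. -/
theorem stmt8 (d₁ d₂ d₁' d₂' : ℕ)
    (S₁ : Set (EuclideanSpace ℂ (Fin d₁ × Fin d₂)))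
    (S₂ : Set (EuclideanSpace ℂ (Fin d₁' × Fin d₂')))
    (hS₁fin : S₁.Finite) (hS₂fin : S₂.Finite)
    (hS₁prod : ∀ v ∈ S₁, v ≠ 0 ∧ ∃ (u : EuclideanSpace ℂ (Fin d₁))
      (w : EuclideanSpace ℂ (Fin d₂)), v = tp u w)
    (hS₂prod : ∀ v ∈ S₂, v ≠ 0 ∧ ∃ (u : EuclideanSpace ℂ (Fin d₁'))
      (w : EuclideanSpace ℂ (Fin d₂')), v = tp u w)
    (hS₁upb : ¬ ∃ (u : EuclideanSpace ℂ (Fin d₁)) (w : EuclideanSpace ℂ (Fin d₂)),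
        tp u w ≠ 0 ∧ ∀ v ∈ S₁, inner ℂ v (tp u w) = (0 : ℂ))
    (hS₂upb : ¬ ∃ (u : EuclideanSpace ℂ (Fin d₁')) (w : EuclideanSpace ℂ (Fin d₂')),
        tp u w ≠ 0 ∧ ∀ v ∈ S₂, inner ℂ v (tp u w) = (0 : ℂ)) :
    ¬ ∃ (a : EuclideanSpace ℂ (Fin d₁ × Fin d₁')) (b : EuclideanSpace ℂ (Fin d₂ × Fin d₂')),
        reord a b ≠ 0 ∧
        ∀ v₁ ∈ S₁, ∀ v₂ ∈ S₂, inner ℂ (tp v₁ v₂) (reord a b) = (0 : ℂ) :=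
  stmt8_general d₁ d₂ d₁' d₂' S₁ S₂ hS₁prod hS₁upb hS₂upb
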